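/- Let s ∈ (−1,1) with s ≠ 0, and let θ : ℝ → ℝ be C¹, bounded, integrable, even, and nonincreasing on [0,∞). Let u(x) = HΛ^sθ(x). Then for all 0 < x₂ < x₁, ∫_{x₂}^{x₁} u(x)·θ'(x) dx ≥ ((1−s)/(16s))·(1 − ((x₁−x₂)/(x₁+x₂))^s)·(θ(x₂)−θ(x₁))²/(x₁−x₂)^s. (Note that ((1−s)/(16s))·(1 − ((x₁−x₂)/(x₁+x₂))^s) is positive for both s ∈ (0,1) and s ∈ (−1,0).) -/

import Mathlib

open MeasureTheory Filter Set Topology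

/-- Truncated integral in the principal value defining
`HΛˢθ(x) = (s/c_s) p.v. ∫ θ(y)/((y-x)·|y-x|ˢ) dy`. -/
noncomputable def hlsApprox (s : ℝ) (f : ℝ → ℝ) (x ε : ℝ) : ℝ :=
  ∫ y in {y : ℝ | ε < |y - x|}, f y / ((y - x) * |y - x| ^ s)

/-- The operator `HΛˢ`, for `s ∈ (-1,1)`, `s ≠ 0`:
`HΛˢθ(x) = (s/c_s) p.v. ∫ θ(y)/((y-x)·|y-x|ˢ) dy`, where
`c_s = √π · 2^(1-s) · Γ((1-s)/2) / Γ(s/2)`. -/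
noncomputable def hls (s : ℝ) (f : ℝ → ℝ) (x : ℝ) : ℝ :=
  (s / (Real.sqrt Real.pi * 2 ^ (1 - s) * Real.Gamma ((1 - s) / 2) / Real.Gamma (s / 2))) *
    limUnder (𝓝[>] (0:ℝ)) (hlsApprox s f x)

/-!
Folding the principal value onto `z > 0` writes `HΛˢθ(x)` as `s / c_s` times
`∫₀^∞ (θ(x+z) - θ(x-z)) z^(-1-s) dz`, whose integrand is nonpositive when `θ` is even and
nonincreasing on `[0,∞)`. For `x₂ < x ≤ x₁`, keeping only the window `x - x₂ < z ≤ x + x₂`, on which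
`θ(x+z) ≤ θ(x)` and `θ(x-z) ≥ θ(x₂)`, bounds this integral by
`(θ(x) - θ(x₂)) ∫_{x₁-x₂}^{x₁+x₂} z^(-1-s) dz`. As `θ' ≤ 0` on `(x₂, x₁]`, multiplying by `θ'` and
integrating, with `∫ (θ - θ(x₂)) θ' = (θ(x₁) - θ(x₂))² / 2`, gives
`∫ u θ' ≥ (s / c_s) (θ(x₁) - θ(x₂))² / 2 ∫_{x₁-x₂}^{x₁+x₂} z^(-1-s) dz`; the claimed lower bound is
this with `(1-s)/8` in place of `s / c_s`. Finally the reflection and duplication formulas give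
`s / c_s = s / (2 sin(πs/2) Γ(1-s))`, which is at least `(1-s)/(2π)` because `|sin t| ≤ |t|` and
`Γ ≤ 2` on `[1, 3]`.
-/

open Real
open scoped NNReal

lemma Real.Gamma_le_two {x : ℝ} (h1 : 1 ≤ x) (h3 : x ≤ 3) : Gamma x ≤ 2 := by
  have hx : x ∈ segment ℝ 1 3 := by rw [segment_eq_Icc (by norm_num)]; exact ⟨h1, h3⟩
  have := convexOn_Gamma.le_on_segment (mem_Ioi.2 one_pos) (mem_Ioi.2 (by norm_num)) hx
  have h3 : Gamma 3 = 2 := by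
    rw [show (3:ℝ) = 2 + 1 by norm_num, Gamma_add_one (by norm_num), Gamma_two]; norm_num
  rwa [Gamma_one, h3, max_eq_right one_le_two] at this

lemma mul_sin_pi_mul_div_two_pos {s : ℝ} (hs0 : s ≠ 0) (hs1 : -2 < s) (hs2 : s < 2) :
    0 < s * sin (π * s / 2) := by
  rcases hs0.lt_or_gt with hs | hs
  · refine mul_pos_of_neg_of_neg hs (sin_neg_of_neg_of_neg_pi_lt (by nlinarith [pi_pos]) ?_)
    nlinarith [pi_pos]
  · exact mul_pos hs (sin_pos_of_pos_of_lt_pi (by positivity) (by nlinarith [pi_pos]))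

lemma inv_pi_le_div_two_mul_sin {s : ℝ} (hs0 : s ≠ 0) (hs1 : -2 < s) (hs2 : s < 2) :
    π⁻¹ ≤ s / (2 * sin (π * s / 2)) := by
  have hsign := mul_sin_pi_mul_div_two_pos hs0 hs1 hs2
  have hsin : s * sin (π * s / 2) ≤ π * s ^ 2 / 2 :=
    calc s * sin (π * s / 2) ≤ |s| * |sin (π * s / 2)| := by rw [← abs_mul]; exact le_abs_self _
      _ ≤ |s| * |π * s / 2| := mul_le_mul_of_nonneg_left abs_sin_le_abs (abs_nonneg s)
      _ = π * s ^ 2 / 2 := by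
        rw [← abs_mul, show s * (π * s / 2) = π * s ^ 2 / 2 by ring, abs_of_nonneg (by positivity)]
  have hsin0 : sin (π * s / 2) ≠ 0 := right_ne_zero_of_mul hsign.ne'
  rw [show s / (2 * sin (π * s / 2)) = s ^ 2 / (2 * (s * sin (π * s / 2))) by field_simp,
    inv_eq_one_div, div_le_div_iff₀ pi_pos (by positivity)]
  nlinarith

noncomputable def hlsConst (s : ℝ) : ℝ :=
  s / (√π * 2 ^ (1 - s) * Gamma ((1 - s) / 2) / Gamma (s / 2))

lemma hlsConst_eq {s : ℝ} (hs0 : s ≠ 0) (hs1 : -1 < s) (hs2 : s < 1) :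
    hlsConst s = s / (2 * sin (π * s / 2) * Gamma (1 - s)) := by
  have hA : Gamma (s / 2) ≠ 0 := by
    refine Gamma_ne_zero fun m hm => ?_
    rcases m with _ | m
    · exact hs0 (by simpa using hm)
    · push_cast at hm; linarith [(m.cast_nonneg : (0:ℝ) ≤ m)]
  have hB : Gamma (1 - s / 2) ≠ 0 := (Gamma_pos_of_pos (by linarith)).ne'
  have hS : sin (π * s / 2) ≠ 0 :=
    right_ne_zero_of_mul (mul_sin_pi_mul_div_two_pos hs0 (by linarith) (by linarith)).ne'
  have hrefl : Gamma (s / 2) * Gamma (1 - s / 2) * sin (π * s / 2) = π := by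
    rw [Gamma_mul_Gamma_one_sub, show π * (s / 2) = π * s / 2 by ring, div_mul_cancel₀ _ hS]
  have hdup := Gamma_mul_Gamma_add_half ((1 - s) / 2)
  rw [show (1 - s) / 2 + 1 / 2 = 1 - s / 2 by ring, show 2 * ((1 - s) / 2) = 1 - s by ring,
    show 1 - (1 - s) = s by ring] at hdup
  have h2 : (2:ℝ) ^ (1 - s) * 2 ^ s = 2 := by rw [← rpow_add two_pos]; simp
  have hpi : √π * √π = π := mul_self_sqrt pi_pos.le
  rw [hlsConst]
  congr 1
  rw [div_eq_iff hA]
  refine mul_right_cancel₀ hB ?_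
  linear_combination (√π * 2 ^ (1 - s)) * hdup + (2 ^ (1 - s) * 2 ^ s * Gamma (1 - s)) * hpi
    + (Gamma (1 - s) * π) * h2 - (2 * Gamma (1 - s)) * hrefl

lemma le_hlsConst {s : ℝ} (hs0 : s ≠ 0) (hs1 : -1 < s) (hs2 : s < 1) :
    (1 - s) / 8 ≤ hlsConst s := by
  have hG : Gamma (1 - s) * (1 - s) ≤ 2 := by
    rw [mul_comm, ← Gamma_add_one (by linarith), show 1 - s + 1 = 2 - s by ring]
    exact Gamma_le_two (by linarith) (by linarith)
  have hGpos : 0 < Gamma (1 - s) := Gamma_pos_of_pos (by linarith)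
  rw [hlsConst_eq hs0 hs1 hs2, ← div_div, le_div_iff₀ hGpos]
  calc (1 - s) / 8 * Gamma (1 - s) ≤ 4⁻¹ := by linarith
    _ ≤ π⁻¹ := inv_anti₀ pi_pos pi_le_four
    _ ≤ _ := inv_pi_le_div_two_mul_sin hs0 (by linarith) (by linarith)

lemma setIntegral_abs_gt_eq_integral_Ioi {E : Type*} [NormedAddCommGroup E] [NormedSpace ℝ E]
    {f : ℝ → E} {ε : ℝ} (hε : 0 ≤ ε) (hf : IntegrableOn f {z | ε < |z|}) :
    ∫ z in {z | ε < |z|}, f z = ∫ z in Ioi ε, (f z + f (-z)) := by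
  have hsplit : {z : ℝ | ε < |z|} = Ioi ε ∪ Iio (-ε) := by
    ext z; simp only [mem_union, mem_Ioi, mem_Iio, lt_abs, lt_neg, mem_ofPred_eq]
  rw [hsplit] at hf ⊢
  have hneg : IntegrableOn (fun z => f (-z)) (Ioi ε) := by
    simpa using (hf.mono_set subset_union_right).comp_neg
  rw [setIntegral_union (Ioi_disjoint_Iio_of_le (by linarith)) measurableSet_Iio
    (hf.mono_set subset_union_left) (hf.mono_set subset_union_right),
    integral_add (hf.mono_set subset_union_left) hneg, integral_comp_neg_Ioi,
    integral_Iic_eq_integral_Iio]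

lemma integrableOn_div_mul_abs_rpow {g : ℝ → ℝ} {s ε : ℝ} (hs : -1 < s) (hε : 0 < ε)
    (hg : Integrable g) : IntegrableOn (fun z => g z / (z * |z| ^ s)) {z | ε < |z|} := by
  refine Integrable.mono' ((hg.abs.const_mul (ε ^ (-(1 + s)))).integrableOn)
    ((hg.aemeasurable.div (by fun_prop)).aestronglyMeasurable.restrict) ?_
  rw [ae_restrict_iff' (measurableSet_lt measurable_const measurable_abs)]
  refine ae_of_all _ fun z (hz : ε < |z|) => ?_
  have hz0 : 0 < |z| := hε.trans hz
  rw [norm_div, norm_mul, Real.norm_eq_abs, Real.norm_eq_abs, Real.norm_eq_abs,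
    abs_of_nonneg (rpow_nonneg (abs_nonneg z) s), ← rpow_one_add' hz0.le (by linarith),
    div_eq_mul_inv, mul_comm, rpow_neg hε.le]
  gcongr
  linarith

noncomputable def hlsIntegrand (s : ℝ) (θ : ℝ → ℝ) (x z : ℝ) : ℝ :=
  (θ (x + z) - θ (x - z)) / z ^ (1 + s)

noncomputable def hlsPV (s : ℝ) (θ : ℝ → ℝ) (x : ℝ) : ℝ :=
  ∫ z in Ioi 0, hlsIntegrand s θ x z

lemma hlsApprox_eq_integral_Ioi {s ε : ℝ} {θ : ℝ → ℝ} (hs : -1 < s) (hθ : Integrable θ)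
    (x : ℝ) (hε : 0 < ε) :
    hlsApprox s θ x ε = ∫ z in Ioi ε, hlsIntegrand s θ x z := by
  have htrans : hlsApprox s θ x ε = ∫ z in {z | ε < |z|}, θ (x + z) / (z * |z| ^ s) := by
    rw [hlsApprox, ← (measurePreserving_add_left volume x).setIntegral_preimage_emb
      (measurableEmbedding_addLeft x)]
    simp only [preimage_ofPred_eq, add_sub_cancel_left]
  rw [htrans, setIntegral_abs_gt_eq_integral_Ioi hε.le
    (integrableOn_div_mul_abs_rpow hs hε (hθ.comp_add_left x))]
  refine setIntegral_congr_fun measurableSet_Ioi fun z (hz : ε < z) => ?_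
  have hz0 : 0 < z := hε.trans hz
  rw [hlsIntegrand, abs_neg, abs_of_pos hz0, ← sub_eq_add_neg,
    rpow_one_add' hz0.le (by linarith)]
  field_simp
  ring

lemma tendsto_setIntegral_Ioi_nhdsGT {E : Type*} [NormedAddCommGroup E] [NormedSpace ℝ E]
    {f : ℝ → E} {a : ℝ} (hf : IntegrableOn f (Ioi a)) :
    Tendsto (fun ε => ∫ z in Ioi ε, f z) (𝓝[>] a) (𝓝 (∫ z in Ioi a, f z)) := by
  have hprim : Tendsto (fun ε => ∫ z in a..ε, f z) (𝓝[>] a) (𝓝 0) := by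
    have hint : IntervalIntegrable f volume (min a a) (max a (a + 1)) := by
      rw [min_self, max_eq_right (by linarith), intervalIntegrable_iff_integrableOn_Ioc_of_le
        (by linarith)]
      exact hf.mono_set Ioc_subset_Ioi_self
    have hcont := intervalIntegral.continuousWithinAt_primitive (measure_singleton a) hint
    simpa using (hcont.mono_of_mem_nhdsWithin (Icc_mem_nhdsGT (by linarith))).tendsto
  have hlim := (tendsto_const_nhds (x := ∫ z in Ioi a, f z)).sub hprim
  rw [sub_zero] at hlim
  refine hlim.congr' ?_
  filter_upwards [self_mem_nhdsWithin] with ε hε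
  rw [← intervalIntegral.integral_Ioi_sub_Ioi hf (le_of_lt hε), sub_sub_cancel]

/-- `K` stands for a Lipschitz constant of `θ` on `[x - 1, x + 1]`. -/
noncomputable def hlsMajorant (s : ℝ) (θ : ℝ → ℝ) (K : ℝ≥0) (x z : ℝ) : ℝ :=
  (Ioc (0:ℝ) 1).indicator (fun z => 2 * K * z ^ (-s)) z + (|θ (x + z)| + |θ (x - z)|)

section PrincipalValue

variable {s : ℝ} {θ : ℝ → ℝ} {x : ℝ} {K : ℝ≥0}

lemma LipschitzOnWith.abs_apply_add_sub_apply_sub_le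
    (hK : LipschitzOnWith K θ (Icc (x - 1) (x + 1))) {z : ℝ} (hz : z ∈ Icc 0 1) :
    |θ (x + z) - θ (x - z)| ≤ 2 * K * z := by
  have := hK.dist_le_mul (x + z) ⟨by linarith [hz.1], by linarith [hz.2]⟩
    (x - z) ⟨by linarith [hz.2], by linarith [hz.1]⟩
  rwa [Real.dist_eq, Real.dist_eq, show x + z - (x - z) = 2 * z by ring,
    abs_of_nonneg (by linarith [hz.1] : (0:ℝ) ≤ 2 * z), ← mul_assoc, mul_comm (K : ℝ) 2] at this

lemma norm_hlsIntegrand_le_hlsMajorant (hs : -1 < s)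
    (hK : LipschitzOnWith K θ (Icc (x - 1) (x + 1))) {z : ℝ} (hz : 0 < z) :
    ‖hlsIntegrand s θ x z‖ ≤ hlsMajorant s θ K x z := by
  have hzs : 0 < z ^ (1 + s) := rpow_pos_of_pos hz _
  rw [hlsIntegrand, hlsMajorant, Real.norm_eq_abs, abs_div, abs_of_pos hzs, div_le_iff₀ hzs]
  rcases le_or_gt z 1 with hz1 | hz1
  · have hpow : z ^ (-s) * z ^ (1 + s) = z := by
      rw [← rpow_add hz, show -s + (1 + s) = 1 by ring, rpow_one]
    rw [indicator_of_mem (show z ∈ Ioc (0:ℝ) 1 from ⟨hz, hz1⟩)]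
    calc |θ (x + z) - θ (x - z)| ≤ 2 * K * z := hK.abs_apply_add_sub_apply_sub_le ⟨hz.le, hz1⟩
      _ ≤ _ := by
        rw [add_mul, mul_assoc _ (z ^ (-s)), hpow, le_add_iff_nonneg_right]
        positivity
  · have hone : 1 ≤ z ^ (1 + s) := one_le_rpow hz1.le (by linarith)
    rw [indicator_of_notMem (fun h => hz1.not_ge h.2), zero_add]
    calc |θ (x + z) - θ (x - z)| ≤ |θ (x + z)| + |θ (x - z)| := abs_sub _ _
      _ ≤ _ := le_mul_of_one_le_right (by positivity) hone

lemma integrable_hlsMajorant (hs : s < 1) (hθ : Integrable θ) :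
    Integrable (hlsMajorant s θ K x) := by
  refine Integrable.add ?_ ((hθ.comp_add_left x).abs.add (hθ.comp_sub_left x).abs)
  rw [integrable_indicator_iff measurableSet_Ioc,
    ← intervalIntegrable_iff_integrableOn_Ioc_of_le zero_le_one]
  exact (intervalIntegral.intervalIntegrable_rpow' (by linarith)).const_mul _

lemma integral_hlsMajorant (hs : s < 1) (hθ : Integrable θ) :
    ∫ z, hlsMajorant s θ K x z = 2 * K / (1 - s) + 2 * ∫ t, |θ t| := by
  have hpow : IntegrableOn (fun z : ℝ => 2 * K * z ^ (-s)) (Ioc 0 1) :=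
    (intervalIntegral.intervalIntegrable_rpow' (by linarith)).1.const_mul _
  have hnear : ∫ z in Ioc (0:ℝ) 1, 2 * K * z ^ (-s) = 2 * K / (1 - s) := by
    rw [← intervalIntegral.integral_of_le zero_le_one, intervalIntegral.integral_const_mul,
      integral_rpow (Or.inl (by linarith)), zero_rpow (by linarith), one_rpow,
      show -s + 1 = 1 - s by ring]
    ring
  have habs : Integrable fun z => |θ (x + z)| + |θ (x - z)| :=
    (hθ.comp_add_left x).abs.add (hθ.comp_sub_left x).abs
  have hfar : ∫ z, (|θ (x + z)| + |θ (x - z)|) = 2 * ∫ t, |θ t| := by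
    rw [integral_add (hθ.comp_add_left x).abs (hθ.comp_sub_left x).abs,
      integral_add_left_eq_self (fun t => |θ t|), integral_sub_left_eq_self (fun t => |θ t|)]
    ring
  simp only [hlsMajorant]
  rw [integral_add ((integrable_indicator_iff measurableSet_Ioc).2 hpow) habs,
    integral_indicator measurableSet_Ioc, hnear, hfar]

lemma abs_hlsPV_le (hs1 : -1 < s) (hs2 : s < 1) (hθ : Integrable θ)
    (hK : LipschitzOnWith K θ (Icc (x - 1) (x + 1))) :
    |hlsPV s θ x| ≤ 2 * K / (1 - s) + 2 * ∫ t, |θ t| := by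
  rw [← integral_hlsMajorant (x := x) hs2 hθ]
  refine (norm_integral_le_of_norm_le (integrable_hlsMajorant hs2 hθ).integrableOn
    ((ae_restrict_iff' measurableSet_Ioi).2 (ae_of_all _ fun z hz =>
      norm_hlsIntegrand_le_hlsMajorant hs1 hK hz))).trans ?_
  refine setIntegral_le_integral (integrable_hlsMajorant hs2 hθ) (ae_of_all _ fun z => ?_)
  exact add_nonneg (indicator_nonneg (fun z hz => mul_nonneg (by positivity)
    (rpow_nonneg hz.1.le _)) z) (by positivity)

lemma integrableOn_hlsIntegrand (hs1 : -1 < s) (hs2 : s < 1) (hθ : Integrable θ)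
    (hL : LocallyLipschitz θ) :
    IntegrableOn (hlsIntegrand s θ x) (Ioi 0) := by
  obtain ⟨K, hK⟩ := hL.locallyLipschitzOn.exists_lipschitzOnWith_of_compact
    (isCompact_Icc (a := x - 1) (b := x + 1))
  refine Integrable.mono' (integrable_hlsMajorant hs2 hθ).integrableOn ?_
    ((ae_restrict_iff' measurableSet_Ioi).2 (ae_of_all _ fun z hz =>
      norm_hlsIntegrand_le_hlsMajorant hs1 hK hz))
  exact (((hθ.comp_add_left x).aemeasurable.sub (hθ.comp_sub_left x).aemeasurable).div
    (by fun_prop)).aestronglyMeasurable.restrict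

lemma hls_eq_mul_hlsPV (hs1 : -1 < s) (hs2 : s < 1) (hθ : Integrable θ)
    (hL : LocallyLipschitz θ) (x : ℝ) :
    hls s θ x = hlsConst s * hlsPV s θ x := by
  rw [hls, hlsConst]
  congr 1
  refine ((tendsto_setIntegral_Ioi_nhdsGT
    (integrableOn_hlsIntegrand hs1 hs2 hθ hL)).congr' ?_).limUnder_eq
  filter_upwards [self_mem_nhdsWithin] with ε hε
  exact (hlsApprox_eq_integral_Ioi hs1 hθ x hε).symm

lemma measurable_hlsPV (hθ : Measurable θ) : Measurable (hlsPV s θ) :=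
  (Measurable.stronglyMeasurable (by fun_prop :
    Measurable fun p : ℝ × ℝ => (θ (p.1 + p.2) - θ (p.1 - p.2)) / p.2 ^ (1 + s))
    ).integral_prod_right'.measurable

lemma integrableOn_hlsPV {a b : ℝ} (hs1 : -1 < s) (hs2 : s < 1) (hθ : Integrable θ)
    (hL : LocallyLipschitz θ) : IntegrableOn (hlsPV s θ) (Icc a b) := by
  obtain ⟨K, hK⟩ := hL.locallyLipschitzOn.exists_lipschitzOnWith_of_compact
    (isCompact_Icc (a := a - 1) (b := b + 1))
  refine IntegrableOn.of_bound measure_Icc_lt_top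
    (measurable_hlsPV hL.continuous.measurable).aestronglyMeasurable
    (2 * K / (1 - s) + 2 * ∫ t, |θ t|) ((ae_restrict_iff' measurableSet_Icc).2
      (ae_of_all _ fun x hx => ?_))
  exact abs_hlsPV_le hs1 hs2 hθ
    (hK.mono (Icc_subset_Icc (by linarith [hx.1]) (by linarith [hx.2])))

end PrincipalValue

lemma integral_rpow_neg_le_of_le {s a b w : ℝ} (hs : -1 ≤ s) (hw : 0 ≤ w) (hwa : w < a)
    (hab : a ≤ b) :
    ∫ z in (b - w)..(b + w), z ^ (-(1 + s)) ≤ ∫ z in (a - w)..(a + w), z ^ (-(1 + s)) := by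
  have hint : ∀ c, w < c →
      IntervalIntegrable (fun z : ℝ => z ^ (-(1 + s))) volume (c - w) (c + w) :=
    fun c hc => intervalIntegral.intervalIntegrable_rpow (Or.inr fun h => by
      rw [uIcc_of_le (by linarith)] at h; linarith [h.1])
  have hshift := intervalIntegral.integral_comp_add_right (fun z : ℝ => z ^ (-(1 + s))) (b - a)
    (a := a - w) (b := a + w)
  rw [show a - w + (b - a) = b - w by ring, show a + w + (b - a) = b + w by ring] at hshift
  rw [← hshift]
  refine intervalIntegral.integral_mono_on (by linarith) ?_ (hint a hwa) fun z hz => ?_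
  · have h := (hint b (by linarith)).comp_add_right (b - a)
    rwa [show b - w - (b - a) = a - w by ring, show b + w - (b - a) = a + w by ring] at h
  · exact rpow_le_rpow_of_nonpos (by linarith [hz.1]) (by linarith) (by linarith)

lemma integral_rpow_neg_one_add {s a b : ℝ} (hs : s ≠ 0) (ha : 0 < a) (hab : a ≤ b) :
    ∫ z in a..b, z ^ (-(1 + s)) = (1 - (a / b) ^ s) / (s * a ^ s) := by
  have hb : 0 < b := ha.trans_le hab
  rw [integral_rpow (Or.inr ⟨by contrapose! hs; linarith, fun h => by
    rw [uIcc_of_le hab] at h; linarith [h.1]⟩), show -(1 + s) + 1 = -s by ring,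
    rpow_neg ha.le, rpow_neg hb.le, div_rpow ha.le hb.le]
  field_simp [(rpow_pos_of_pos ha s).ne', (rpow_pos_of_pos hb s).ne']
  ring

lemma integral_sub_mul_deriv {θ : ℝ → ℝ} (hθ : ContDiff ℝ 1 θ) (a b : ℝ) :
    ∫ x in a..b, (θ x - θ a) * deriv θ x = (θ b - θ a) ^ 2 / 2 := by
  have hderiv : ∀ x ∈ uIcc a b,
      HasDerivAt (fun y => (θ y - θ a) ^ 2 / 2) ((θ x - θ a) * deriv θ x) x := fun x _ => by
    refine (((hθ.differentiable one_ne_zero x).hasDerivAt.sub_const (θ a)).fun_pow 2).div_const 2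
      |>.congr_deriv ?_
    norm_num
    ring
  rw [intervalIntegral.integral_eq_sub_of_hasDerivAt hderiv
    (((hθ.continuous.sub continuous_const).mul (hθ.continuous_deriv le_rfl)).intervalIntegrable _ _)]
  ring

section RadialDecrease

variable {θ : ℝ → ℝ}

lemma apply_le_apply_of_abs_le (heven : ∀ x, θ (-x) = θ x) (hmono : AntitoneOn θ (Ici 0))
    {a b : ℝ} (h : |a| ≤ |b|) : θ b ≤ θ a := by
  have habs : ∀ t, θ |t| = θ t := fun t => by
    rcases abs_choice t with ht | ht <;> rw [ht]
    exact heven t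
  rw [← habs a, ← habs b]
  exact hmono (abs_nonneg a) (abs_nonneg b) h

lemma deriv_nonpos_of_antitoneOn_Ici (hmono : AntitoneOn θ (Ici 0)) {x : ℝ} (hx : 0 < x) :
    deriv θ x ≤ 0 := by
  rw [← derivWithin_of_mem_nhds (Ici_mem_nhds hx)]
  exact hmono.derivWithin_nonpos

lemma hlsPV_le {s x₁ x₂ x : ℝ} (heven : ∀ x, θ (-x) = θ x) (hmono : AntitoneOn θ (Ici 0))
    (hs : -1 < s) (hx₂ : 0 < x₂) (hx : x₂ < x) (hx₁ : x ≤ x₁)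
    (hF : IntegrableOn (hlsIntegrand s θ x) (Ioi 0)) :
    hlsPV s θ x ≤ (θ x - θ x₂) * ∫ z in (x₁ - x₂)..(x₁ + x₂), z ^ (-(1 + s)) := by
  set F := hlsIntegrand s θ x
  have hwin : Ioc (x - x₂) (x + x₂) ⊆ Ioi 0 := fun z hz => show 0 < z by linarith [hz.1]
  have hFnonpos : ∀ z ∈ Ioi (0:ℝ), F z ≤ 0 := fun z (hz : 0 < z) => by
    have : θ (x + z) ≤ θ (x - z) := apply_le_apply_of_abs_le heven hmono
      (by rw [abs_of_pos (by linarith : 0 < x + z)]; exact abs_le.2 ⟨by linarith, by linarith⟩)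
    exact div_nonpos_of_nonpos_of_nonneg (by linarith) (rpow_nonneg hz.le _)
  have hwindow : hlsPV s θ x ≤ ∫ z in Ioc (x - x₂) (x + x₂), F z := by
    have := setIntegral_mono_set hF.neg ((ae_restrict_iff' measurableSet_Ioi).2
      (ae_of_all _ fun z hz => neg_nonneg.2 (hFnonpos z hz))) hwin.eventuallyLE
    simp only [Pi.neg_apply, integral_neg, neg_le_neg_iff] at this
    exact this
  have hpoint : ∀ z ∈ Ioc (x - x₂) (x + x₂), F z ≤ (θ x - θ x₂) * z ^ (-(1 + s)) := by
    intro z hz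
    have hz0 : 0 < z := hwin hz
    have h₁ : θ (x + z) ≤ θ x := apply_le_apply_of_abs_le heven hmono
      (by rw [abs_of_pos (by linarith), abs_of_pos (by linarith)]; linarith)
    have h₂ : θ x₂ ≤ θ (x - z) := apply_le_apply_of_abs_le heven hmono
      (by rw [abs_of_pos hx₂]; exact abs_le.2 ⟨by linarith [hz.2], by linarith [hz.1]⟩)
    rw [rpow_neg hz0.le, ← div_eq_mul_inv]
    exact div_le_div_of_nonneg_right (by linarith) (rpow_nonneg hz0.le _)
  have hθx : θ x - θ x₂ ≤ 0 := by linarith [hmono (le_of_lt hx₂) (by linarith : (0:ℝ) ≤ x) hx.le]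
  have hpow : IntervalIntegrable (fun z : ℝ => z ^ (-(1 + s))) volume (x - x₂) (x + x₂) :=
    intervalIntegral.intervalIntegrable_rpow (Or.inr fun h => by
      rw [uIcc_of_le (by linarith)] at h; linarith [h.1])
  calc hlsPV s θ x ≤ ∫ z in Ioc (x - x₂) (x + x₂), F z := hwindow
    _ ≤ ∫ z in Ioc (x - x₂) (x + x₂), (θ x - θ x₂) * z ^ (-(1 + s)) :=
      setIntegral_mono_on (hF.mono_set hwin) (hpow.1.const_mul _) measurableSet_Ioc hpoint
    _ = (θ x - θ x₂) * ∫ z in (x - x₂)..(x + x₂), z ^ (-(1 + s)) := by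
      rw [intervalIntegral.integral_of_le (by linarith), integral_const_mul]
    _ ≤ (θ x - θ x₂) * ∫ z in (x₁ - x₂)..(x₁ + x₂), z ^ (-(1 + s)) :=
      mul_le_mul_of_nonpos_left (integral_rpow_neg_le_of_le hs.le hx₂.le hx hx₁) hθx

lemma integral_hlsPV_mul_deriv_ge {s x₁ x₂ : ℝ} (hs1 : -1 < s) (hs2 : s < 1)
    (hC1 : ContDiff ℝ 1 θ) (hθ : Integrable θ) (heven : ∀ x, θ (-x) = θ x)
    (hmono : AntitoneOn θ (Ici 0)) (hx₂ : 0 < x₂) (hx₁ : x₂ < x₁) :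
    (θ x₁ - θ x₂) ^ 2 / 2 * ∫ z in (x₁ - x₂)..(x₁ + x₂), z ^ (-(1 + s))
      ≤ ∫ x in x₂..x₁, hlsPV s θ x * deriv θ x := by
  have hderiv : Continuous (deriv θ) := hC1.continuous_deriv le_rfl
  have hint : IntervalIntegrable (fun x => hlsPV s θ x * deriv θ x) volume x₂ x₁ := by
    refine IntervalIntegrable.mul_continuousOn ?_ hderiv.continuousOn
    rw [intervalIntegrable_iff_integrableOn_Icc_of_le hx₁.le]
    exact integrableOn_hlsPV hs1 hs2 hθ hC1.locallyLipschitz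
  rw [← integral_sub_mul_deriv hC1, ← intervalIntegral.integral_mul_const]
  refine intervalIntegral.integral_mono_on_of_le_Ioo hx₁.le
    ((((hC1.continuous.sub continuous_const).mul hderiv).mul continuous_const).intervalIntegrable
      _ _) hint fun x hx => ?_
  have hPV := hlsPV_le heven hmono hs1 hx₂ hx.1 hx.2.le
    (integrableOn_hlsIntegrand hs1 hs2 hθ hC1.locallyLipschitz)
  have := mul_le_mul_of_nonpos_right hPV (deriv_nonpos_of_antitoneOn_Ici hmono (hx₂.trans hx.1))
  linarith

end RadialDecrease

theorem stmt_14_general (s : ℝ) (hs1 : -1 < s) (hs2 : s < 1) (hs0 : s ≠ 0)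
    (θ : ℝ → ℝ)
    (hC1 : ContDiff ℝ 1 θ)
    (hint : Integrable θ)
    (heven : ∀ x : ℝ, θ (-x) = θ x)
    (hmono : AntitoneOn θ (Set.Ici 0))
    (x₁ x₂ : ℝ) (hx₂ : 0 < x₂) (hx₁ : x₂ < x₁) :
    ((1 - s) / (16 * s)) * (1 - ((x₁ - x₂) / (x₁ + x₂)) ^ s) *
        ((θ x₂ - θ x₁) ^ 2 / (x₁ - x₂) ^ s)
      ≤ ∫ x in x₂..x₁, hls s θ x * deriv θ x := by
  set I := ∫ z in (x₁ - x₂)..(x₁ + x₂), z ^ (-(1 + s))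
  have hc : 0 ≤ hlsConst s := le_trans (by linarith) (le_hlsConst hs0 hs1 hs2)
  have hI : 0 ≤ I := intervalIntegral.integral_nonneg (by linarith)
    fun z hz => rpow_nonneg (by linarith [hz.1]) _
  have hIval : I = (1 - ((x₁ - x₂) / (x₁ + x₂)) ^ s) / (s * (x₁ - x₂) ^ s) :=
    integral_rpow_neg_one_add hs0 (by linarith) (by linarith)
  have hpow : (x₁ - x₂) ^ s ≠ 0 := (rpow_pos_of_pos (by linarith) s).ne'
  have hhls : ∀ x, hls s θ x * deriv θ x = hlsConst s * (hlsPV s θ x * deriv θ x) := fun x => by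
    rw [hls_eq_mul_hlsPV hs1 hs2 hint hC1.locallyLipschitz, mul_assoc]
  simp_rw [hhls, intervalIntegral.integral_const_mul]
  calc _ = (1 - s) / 8 * ((θ x₁ - θ x₂) ^ 2 / 2 * I) := by rw [hIval]; field_simp; ring
    _ ≤ hlsConst s * ∫ x in x₂..x₁, hlsPV s θ x * deriv θ x :=
      mul_le_mul (le_hlsConst hs0 hs1 hs2)
        (integral_hlsPV_mul_deriv_ge hs1 hs2 hC1 hint heven hmono hx₂ hx₁) (by positivity) hc

/-- Theorem: for `s ∈ (-1,1)`, `s ≠ 0`, a `C¹`, bounded, integrable, even function `θ`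
nonincreasing on `[0,∞)`, and `u = HΛˢθ`, one has, for all `0 < x₂ < x₁`,
`∫_{x₂}^{x₁} u·θ' dx ≥ ((1-s)/(16s))·(1-((x₁-x₂)/(x₁+x₂))ˢ)·(θ(x₂)-θ(x₁))²/(x₁-x₂)ˢ`. -/
theorem stmt_14 (s : ℝ) (hs1 : -1 < s) (hs2 : s < 1) (hs0 : s ≠ 0)
    (θ : ℝ → ℝ)
    (hC1 : ContDiff ℝ 1 θ)
    (hbdd : ∃ M : ℝ, ∀ x : ℝ, |θ x| ≤ M)
    (hint : Integrable θ)
    (heven : ∀ x : ℝ, θ (-x) = θ x)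
    (hmono : AntitoneOn θ (Set.Ici 0))
    (x₁ x₂ : ℝ) (hx₂ : 0 < x₂) (hx₁ : x₂ < x₁) :
    ((1 - s) / (16 * s)) * (1 - ((x₁ - x₂) / (x₁ + x₂)) ^ s) *
        ((θ x₂ - θ x₁) ^ 2 / (x₁ - x₂) ^ s)
      ≤ ∫ x in x₂..x₁, hls s θ x * deriv θ x :=
  stmt_14_general s hs1 hs2 hs0 θ hC1 hint heven hmono x₁ x₂ hx₂ hx₁
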